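/- arXiv:2603.06747 — 2 statements merged into one kernel-verified Lean document; each statement's English description precedes it below -/
import Mathlib

section
/- For integers n ≥ 3 and m ≥ 2, let C_n be the cycle with n vertices and P_m the path with m vertices. Then AT(C_n +_S P_m) = 3. -/
open scoped Classical

/-- The outdegree of a vertex `v` in a finite set of arcs `A`. -/
noncomputable def arcOutDeg {V : Type*} (A : Finset (V × V)) (v : V) : ℕ :=
  (A.filter fun a => a.1 = v).card

/-- The indegree of a vertex `v` in a finite set of arcs `A`. -/
noncomputable def arcInDeg {V : Type*} (A : Finset (V × V)) (v : V) : ℕ :=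
  (A.filter fun a => a.2 = v).card

/-- `A` is an orientation of the simple graph `G`: every arc of `A` joins adjacent
vertices, and every edge of `G` receives exactly one of its two possible directions. -/
def IsOrientation {V : Type*} (G : SimpleGraph V) (A : Finset (V × V)) : Prop :=
  (∀ a ∈ A, G.Adj a.1 a.2) ∧ ∀ u v : V, G.Adj u v → ((u, v) ∈ A ↔ (v, u) ∉ A)

/-- A set of arcs is Eulerian if at every vertex the indegree equals the outdegree. -/
def IsEulerianSub {V : Type*} (B : Finset (V × V)) : Prop :=
  ∀ v : V, arcInDeg B v = arcOutDeg B v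

/-- An orientation (given by its arc set `A`) is an Alon–Tarsi orientation if the number
of its even Eulerian sub-digraphs differs from the number of its odd Eulerian
sub-digraphs. -/
def IsATOrientation {V : Type*} (A : Finset (V × V)) : Prop :=
  (A.powerset.filter fun B => IsEulerianSub B ∧ Even B.card).card ≠
    (A.powerset.filter fun B => IsEulerianSub B ∧ ¬ Even B.card).card

/-- The Alon–Tarsi number of `G`: the least `k` such that `G` has an Alon–Tarsi
orientation with maximum outdegree at most `k - 1` (i.e. `< k`). -/
noncomputable def alonTarsiNumber {V : Type*} (G : SimpleGraph V) : ℕ :=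
  sInf {k : ℕ | ∃ A : Finset (V × V),
    IsOrientation G A ∧ IsATOrientation A ∧ ∀ v : V, arcOutDeg A v < k}

/-- A graph is `k`-degenerate if every nonempty (induced) subgraph has a vertex of
degree at most `k`. -/
def Degenerate {V : Type*} (k : ℕ) (G : SimpleGraph V) : Prop :=
  ∀ s : Finset V, s.Nonempty → ∃ v ∈ s, (s.filter fun u => G.Adj v u).card ≤ k

/-- The subdivision graph `S(G)`: each edge `uv` of `G` is replaced by a path `u-e-v`
through the new vertex `e` corresponding to `uv`. -/
def subdivisionGraph {V : Type*} (G : SimpleGraph V) : SimpleGraph (V ⊕ ↥G.edgeSet) :=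
  SimpleGraph.fromRel fun a b =>
    match a, b with
    | Sum.inl u, Sum.inr e => u ∈ (e : Sym2 V)
    | _, _ => False

/-- The graph `R(G)`: `G` together with, for each edge `uv`, a new vertex joined to
`u` and `v`. -/
def rGraph {V : Type*} (G : SimpleGraph V) : SimpleGraph (V ⊕ ↥G.edgeSet) :=
  SimpleGraph.fromRel fun a b =>
    match a, b with
    | Sum.inl u, Sum.inl v => G.Adj u v
    | Sum.inl u, Sum.inr e => u ∈ (e : Sym2 V)
    | _, _ => False

/-- The graph `Q(G)`: new vertices joined to the endpoints of their edges, and two new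
vertices joined iff the corresponding edges of `G` share an endpoint; original
vertices are pairwise nonadjacent. -/
def qGraph {V : Type*} (G : SimpleGraph V) : SimpleGraph (V ⊕ ↥G.edgeSet) :=
  SimpleGraph.fromRel fun a b =>
    match a, b with
    | Sum.inl u, Sum.inr e => u ∈ (e : Sym2 V)
    | Sum.inr e, Sum.inr f => e ≠ f ∧ ∃ u : V, u ∈ (e : Sym2 V) ∧ u ∈ (f : Sym2 V)
    | _, _ => False

/-- The total graph `T(G)`. -/
def tGraph {V : Type*} (G : SimpleGraph V) : SimpleGraph (V ⊕ ↥G.edgeSet) :=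
  SimpleGraph.fromRel fun a b =>
    match a, b with
    | Sum.inl u, Sum.inl v => G.Adj u v
    | Sum.inl u, Sum.inr e => u ∈ (e : Sym2 V)
    | Sum.inr e, Sum.inr f => e ≠ f ∧ ∃ u : V, u ∈ (e : Sym2 V) ∧ u ∈ (f : Sym2 V)
    | _, _ => False

/-- The `F`-sum construction: given a graph `K` on `V ⊕ E` (playing the role of `F(G)`,
whose "original" vertices are those of the form `Sum.inl u`) and a graph `H` on `W`,
two vertices `(u₁, u₂)` and `(v₁, v₂)` are adjacent iff either `u₁ = v₁` is an original
vertex and `u₂v₂ ∈ E(H)`, or `u₂ = v₂` and `u₁v₁ ∈ E(K)`. -/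
def fSum {V E W : Type*} (K : SimpleGraph (V ⊕ E)) (H : SimpleGraph W) :
    SimpleGraph ((V ⊕ E) × W) :=
  SimpleGraph.fromRel fun a b =>
    (a.1 = b.1 ∧ (∃ u : V, a.1 = Sum.inl u) ∧ H.Adj a.2 b.2) ∨
      (a.2 = b.2 ∧ K.Adj a.1 b.1)

/-- The `S`-sum `G +_S H`. -/
def sSum {V W : Type*} (G : SimpleGraph V) (H : SimpleGraph W) :
    SimpleGraph ((V ⊕ ↥G.edgeSet) × W) :=
  fSum (subdivisionGraph G) H

/-- The `R`-sum `G +_R H`. -/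
def rSum {V W : Type*} (G : SimpleGraph V) (H : SimpleGraph W) :
    SimpleGraph ((V ⊕ ↥G.edgeSet) × W) :=
  fSum (rGraph G) H

/-- The `Q`-sum `G +_Q H`. -/
def qSum {V W : Type*} (G : SimpleGraph V) (H : SimpleGraph W) :
    SimpleGraph ((V ⊕ ↥G.edgeSet) × W) :=
  fSum (qGraph G) H

/-- The `T`-sum `G +_T H`. -/
def tSum {V W : Type*} (G : SimpleGraph V) (H : SimpleGraph W) :
    SimpleGraph ((V ⊕ ↥G.edgeSet) × W) :=
  fSum (tGraph G) H

/-- The star graph `S_n = K_{1,n}`. -/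
def starGraph (n : ℕ) : SimpleGraph (Fin 1 ⊕ Fin n) :=
  completeBipartiteGraph (Fin 1) (Fin n)

/-! In `G +_S P_m`, orient each subdivision vertex towards the two ends of its edge and each
copy `(u, j)` of an original vertex towards `(u, j - 1)`. This orientation strictly decreases a
rank function, so its only Eulerian subdigraph is empty, and its maximum outdegree is 2; hence
`AT ≤ 3`. Conversely, when `G` has minimum degree at least 2, every vertex of the S-sum has
degree at least 2 and the original vertices of layer 0 have degree at least 3, so there are more
edges than vertices and no orientation has maximum outdegree at most 1. -/

open Finset SimpleGraph

section AcyclicOrientation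

variable {V : Type*}

lemma IsEulerianSub.eq_empty_of_forall_lt {B : Finset (V × V)} (hB : IsEulerianSub B)
    (f : V → ℕ) (hf : ∀ a ∈ B, f a.2 < f a.1) : B = ∅ := by
  by_contra hne
  -- an arc whose head has minimal rank cannot be continued
  obtain ⟨a, ha, hmin⟩ := exists_min_image B (fun a => f a.2) (nonempty_iff_ne_empty.2 hne)
  have hin : 0 < arcInDeg B a.2 := card_pos.2 ⟨a, mem_filter.2 ⟨ha, rfl⟩⟩
  obtain ⟨b, hb⟩ := card_pos.1 (hB a.2 ▸ hin)
  rw [mem_filter] at hb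
  have hdesc := hf b hb.1
  rw [hb.2] at hdesc
  exact absurd (hmin b hb.1) (not_le.2 hdesc)

lemma isATOrientation_of_forall_lt {A : Finset (V × V)} (f : V → ℕ)
    (hf : ∀ a ∈ A, f a.2 < f a.1) : IsATOrientation A := by
  have hEuler : ∀ B ∈ A.powerset, IsEulerianSub B → B = ∅ := fun B hBA hB =>
    hB.eq_empty_of_forall_lt f fun a ha => hf a (mem_powerset.1 hBA ha)
  have heven : {B ∈ A.powerset | IsEulerianSub B ∧ Even #B} = {∅} := by
    ext B
    simp only [mem_filter, mem_singleton]
    refine ⟨fun ⟨hBA, hB, _⟩ => hEuler B hBA hB, ?_⟩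
    rintro rfl
    exact ⟨empty_mem_powerset A, fun v => by simp [arcInDeg, arcOutDeg], by simp⟩
  have hodd : {B ∈ A.powerset | IsEulerianSub B ∧ ¬Even #B} = ∅ :=
    filter_eq_empty_iff.2 fun B hBA ⟨hB, hodd⟩ => hodd (by simp [hEuler B hBA hB])
  rw [IsATOrientation, heven, hodd]
  simp

end AcyclicOrientation

section Orientation

variable {V : Type*} [Fintype V]

lemma arcOutDeg_eq_card_filter (A : Finset (V × V)) (v : V) :
    arcOutDeg A v = #{u | (v, u) ∈ A} := by
  refine card_nbij' Prod.snd (Prod.mk v) ?_ ?_ ?_ ?_ <;> intro a <;> aesop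

lemma arcInDeg_eq_card_filter (A : Finset (V × V)) (v : V) :
    arcInDeg A v = #{u | (u, v) ∈ A} := by
  refine card_nbij' Prod.fst (Prod.mk · v) ?_ ?_ ?_ ?_ <;> intro a <;> aesop

lemma sum_arcOutDeg (A : Finset (V × V)) : ∑ v, arcOutDeg A v = #A :=
  (card_eq_sum_card_fiberwise fun a _ => mem_univ a.1).symm

lemma sum_arcInDeg (A : Finset (V × V)) : ∑ v, arcInDeg A v = #A :=
  (card_eq_sum_card_fiberwise fun a _ => mem_univ a.2).symm

variable {G : SimpleGraph V} {A : Finset (V × V)}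

lemma IsOrientation.arcInDeg_add_arcOutDeg (hA : IsOrientation G A) (v : V) :
    arcInDeg A v + arcOutDeg A v = G.degree v := by
  have hsplit : G.neighborFinset v =
      ({u | (u, v) ∈ A} : Finset V) ∪ ({u | (v, u) ∈ A} : Finset V) := by
    ext u
    simp only [mem_neighborFinset, mem_union, mem_filter, mem_univ, true_and]
    refine ⟨fun h => ?_, ?_⟩
    · by_cases hvu : (v, u) ∈ A
      · exact Or.inr hvu
      · exact Or.inl ((hA.2 u v h.symm).2 hvu)
    · rintro (h | h)
      · exact (hA.1 _ h).symm
      · exact hA.1 _ h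
  have hdisj : Disjoint ({u | (u, v) ∈ A} : Finset V) ({u | (v, u) ∈ A} : Finset V) :=
    disjoint_filter.2 fun u _ h => (hA.2 u v (hA.1 _ h)).1 h
  rw [arcInDeg_eq_card_filter, arcOutDeg_eq_card_filter, ← card_union_of_disjoint hdisj,
    ← hsplit, card_neighborFinset_eq_degree]

lemma IsOrientation.arcOutDeg_le_degree (hA : IsOrientation G A) (v : V) :
    arcOutDeg A v ≤ G.degree v :=
  (Nat.le_add_left _ _).trans (hA.arcInDeg_add_arcOutDeg v).le

lemma IsOrientation.sum_degree (hA : IsOrientation G A) : ∑ v, G.degree v = 2 * #A := by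
  simp only [← hA.arcInDeg_add_arcOutDeg, sum_add_distrib, sum_arcInDeg, sum_arcOutDeg]
  ring

lemma IsOrientation.exists_two_le_arcOutDeg (hA : IsOrientation G A)
    (hdeg : ∀ v, 2 ≤ G.degree v) {v₀ : V} (hv₀ : 3 ≤ G.degree v₀) :
    ∃ v, 2 ≤ arcOutDeg A v := by
  by_contra! hout
  have hlt : ∑ _v : V, 2 < ∑ v, G.degree v :=
    sum_lt_sum (fun v _ => hdeg v) ⟨v₀, mem_univ _, by omega⟩
  have hle : ∑ v, arcOutDeg A v ≤ ∑ _v : V, 1 :=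
    sum_le_sum fun v _ => Nat.le_of_lt_succ (hout v)
  rw [hA.sum_degree, ← sum_arcOutDeg, sum_const, smul_eq_mul] at hlt
  rw [sum_const, smul_eq_mul] at hle
  omega

noncomputable def rankOrientation (G : SimpleGraph V) (f : V → ℕ) : Finset (V × V) :=
  {a | G.Adj a.1 a.2 ∧ f a.2 < f a.1}

lemma isOrientation_rankOrientation {f : V → ℕ} (hf : ∀ u v, G.Adj u v → f u ≠ f v) :
    IsOrientation G (rankOrientation G f) := by
  refine ⟨fun a ha => (mem_filter.1 ha).2.1, fun u v huv => ?_⟩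
  have := hf u v huv
  simp only [rankOrientation, mem_filter, mem_univ, true_and, huv, huv.symm]
  omega

lemma isATOrientation_rankOrientation (G : SimpleGraph V) (f : V → ℕ) :
    IsATOrientation (rankOrientation G f) :=
  isATOrientation_of_forall_lt f fun _ ha => (mem_filter.1 ha).2.2

lemma arcOutDeg_rankOrientation (G : SimpleGraph V) (f : V → ℕ) (v : V) :
    arcOutDeg (rankOrientation G f) v = #{w | G.Adj v w ∧ f w < f v} := by
  simp [arcOutDeg_eq_card_filter, rankOrientation]

end Orientation

lemma alonTarsiNumber_eq_of_forall {V : Type*} {G : SimpleGraph V} {k : ℕ} {A : Finset (V × V)}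
    (hA : IsOrientation G A) (hAT : IsATOrientation A) (hout : ∀ v, arcOutDeg A v < k + 1)
    (hlow : ∀ B, IsOrientation G B → IsATOrientation B → ∃ v, k ≤ arcOutDeg B v) :
    alonTarsiNumber G = k + 1 := by
  refine le_antisymm (Nat.sInf_le ⟨A, hA, hAT, hout⟩) (le_csInf ⟨_, A, hA, hAT, hout⟩ ?_)
  rintro j ⟨B, hB, hBAT, hBout⟩
  obtain ⟨v, hv⟩ := hlow B hB hBAT
  exact hv.trans_lt (hBout v)
section SSum

variable {V W : Type*} {G : SimpleGraph V} {H : SimpleGraph W}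

@[simp]
lemma sSum_adj_inl_inl {u v : V} {i j : W} :
    (sSum G H).Adj (.inl u, i) (.inl v, j) ↔ u = v ∧ H.Adj i j := by
  simp [sSum, fSum, subdivisionGraph, H.adj_comm j i]
  grind [H.ne_of_adj]

@[simp]
lemma sSum_adj_inl_inr {u : V} {e : G.edgeSet} {i j : W} :
    (sSum G H).Adj (.inl u, i) (.inr e, j) ↔ i = j ∧ u ∈ (e : Sym2 V) := by
  simp only [sSum, fSum, subdivisionGraph, SimpleGraph.fromRel_adj]
  aesop

@[simp]
lemma sSum_adj_inr_inl {u : V} {e : G.edgeSet} {i j : W} :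
    (sSum G H).Adj (.inr e, i) (.inl u, j) ↔ i = j ∧ u ∈ (e : Sym2 V) := by
  rw [SimpleGraph.adj_comm, sSum_adj_inl_inr, eq_comm]

@[simp]
lemma sSum_not_adj_inr_inr {e f : G.edgeSet} {i j : W} :
    ¬(sSum G H).Adj (.inr e, i) (.inr f, j) := by
  simp [sSum, fSum, subdivisionGraph]

variable [Fintype V] [Fintype W]

lemma degree_sSum_inr (e : G.edgeSet) (j : W) : (sSum G H).degree (.inr e, j) = 2 := by
  obtain ⟨e, he⟩ := e
  induction e using Sym2.ind with
  | _ x y =>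
  have hnbr :
      (sSum G H).neighborFinset (.inr ⟨s(x, y), he⟩, j) = {(.inl x, j), (.inl y, j)} := by
    ext ⟨a | f, i⟩ <;> simp [eq_comm]
    tauto
  rw [← card_neighborFinset_eq_degree, hnbr, card_pair (by simpa using G.ne_of_adj he)]

lemma le_degree_sSum_inl (u : V) (j : W) :
    G.degree u + H.degree j ≤ (sSum G H).degree (.inl u, j) := by
  simp only [← card_neighborSet_eq_degree, ← Fintype.card_sum]
  refine Fintype.card_le_of_injective
    (Sum.elim (fun x => ⟨(.inr ⟨s(u, x), x.2⟩, j), by simp⟩)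
      (fun i => ⟨(.inl u, i), by simp; exact i.2⟩)) ?_
  rintro (⟨x, hx⟩ | ⟨i, hi⟩) (⟨y, hy⟩ | ⟨k, hk⟩) h <;> simp_all [Subtype.ext_iff]
  grind

end SSum

def sSumPathRank {V : Type*} (G : SimpleGraph V) (m : ℕ) (x : (V ⊕ G.edgeSet) × Fin m) : ℕ :=
  x.1.elim (fun _ => x.2) (fun _ => m)

lemma exists_isATOrientation_sSum_pathGraph {V : Type*} [Fintype V] (G : SimpleGraph V) (m : ℕ) :
    ∃ A, IsOrientation (sSum G (pathGraph m)) A ∧ IsATOrientation A ∧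
      ∀ v, arcOutDeg A v < 3 := by
  set f := sSumPathRank G m
  have hf : ∀ x y, (sSum G (pathGraph m)).Adj x y → f x ≠ f y := by
    rintro ⟨a | e, i⟩ ⟨b | e', j⟩ h <;> simp [f, sSumPathRank, pathGraph_adj] at h ⊢ <;>
      omega
  have hA := isOrientation_rankOrientation hf
  refine ⟨_, hA, isATOrientation_rankOrientation _ f, ?_⟩
  rintro ⟨u | e, j⟩
  · suffices #{w | (sSum G (pathGraph m)).Adj (.inl u, j) w ∧ f w < j} ≤ 1 by
      rw [arcOutDeg_rankOrientation]; exact this.trans_lt (by norm_num)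
    have hlower : ∀ w ∈ ({w | (sSum G (pathGraph m)).Adj (.inl u, j) w ∧ f w < j} : Finset _),
        w.1 = .inl u ∧ (w.2 : ℕ) + 1 = j := by
      rintro ⟨b | e, i⟩ hw <;> simp [f, sSumPathRank, pathGraph_adj] at hw ⊢
      · obtain ⟨⟨rfl, hadj⟩, hlt⟩ := hw
        exact ⟨rfl, by omega⟩
      · exact absurd hw.2 (not_lt.2 j.is_lt.le)
    refine card_le_one.2 fun w hw w' hw' => ?_
    obtain ⟨h1, h2⟩ := hlower w hw
    obtain ⟨h1', h2'⟩ := hlower w' hw'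
    exact Prod.ext (h1.trans h1'.symm) (Fin.ext (by omega))
  · calc arcOutDeg _ _ ≤ (sSum G (pathGraph m)).degree (.inr e, j) := hA.arcOutDeg_le_degree _
      _ < 3 := by rw [degree_sSum_inr]; norm_num

theorem alonTarsiNumber_sSum_pathGraph {V : Type*} [Fintype V] [Nonempty V]
    {G : SimpleGraph V} (hG : ∀ u, 2 ≤ G.degree u) {m : ℕ} (hm : 2 ≤ m) :
    alonTarsiNumber (sSum G (pathGraph m)) = 3 := by
  obtain ⟨A, hA, hAT, hout⟩ := exists_isATOrientation_sSum_pathGraph G m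
  have hdeg : ∀ v, 2 ≤ (sSum G (pathGraph m)).degree v := by
    rintro ⟨u | e, j⟩
    · exact (hG u).trans ((Nat.le_add_right _ _).trans (le_degree_sSum_inl u j))
    · exact (degree_sSum_inr e j).ge
  obtain ⟨u₀⟩ := ‹Nonempty V›
  have hdeg₀ : 3 ≤ (sSum G (pathGraph m)).degree (.inl u₀, ⟨0, by omega⟩) := by
    have hpath : 0 < (pathGraph m).degree ⟨0, by omega⟩ :=
      (degree_pos_iff_exists_adj _ _).2 ⟨⟨1, hm⟩, pathGraph_adj.2 (.inl rfl)⟩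
    have := le_degree_sSum_inl (G := G) (H := pathGraph m) u₀ ⟨0, by omega⟩
    have := hG u₀
    omega
  exact alonTarsiNumber_eq_of_forall hA hAT hout fun B hB _ =>
    hB.exists_two_le_arcOutDeg hdeg hdeg₀

/-- `AT(C_n +_S P_m) = 3` for `n ≥ 3`, `m ≥ 2`. -/
theorem stmt6 (n m : ℕ) (hn : 3 ≤ n) (hm : 2 ≤ m) :
    alonTarsiNumber (sSum (SimpleGraph.cycleGraph n) (SimpleGraph.pathGraph m)) = 3 := by
  obtain ⟨n, rfl⟩ := Nat.exists_eq_add_of_le' hn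
  refine alonTarsiNumber_sSum_pathGraph (fun u => le_of_eq ?_) hm
  convert cycleGraph_degree_three_le.symm
end

section
/- For integers n ≥ 3 and m ≥ 2, let S_n be the star graph (the complete bipartite graph K_{1,n}) and P_m the path with m vertices. Then AT(S_n +_S P_m) = 3. -/
open scoped Classical

/-! ### Auxiliary lemmas -/

section Aux

lemma subdivisionGraph_adj' {V : Type*} (G : SimpleGraph V) (x y : V ⊕ ↥G.edgeSet) :
    (subdivisionGraph G).Adj x y ↔ ∃ (u : V) (e : G.edgeSet), u ∈ (e : Sym2 V) ∧
      ((x = Sum.inl u ∧ y = Sum.inr e) ∨ (x = Sum.inr e ∧ y = Sum.inl u)) := by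
  rw [subdivisionGraph, SimpleGraph.fromRel_adj]
  constructor
  · rintro ⟨hne, h | h⟩
    · rcases x with u | e <;> rcases y with v | f
      · exact absurd h (by simp)
      · exact ⟨u, f, h, Or.inl ⟨rfl, rfl⟩⟩
      · exact absurd h (by simp)
      · exact absurd h (by simp)
    · rcases x with u | e <;> rcases y with v | f
      · exact absurd h (by simp)
      · exact absurd h (by simp)
      · exact ⟨v, e, h, Or.inr ⟨rfl, rfl⟩⟩
      · exact absurd h (by simp)
  · rintro ⟨u, e, hu, ⟨rfl, rfl⟩ | ⟨rfl, rfl⟩⟩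
    · exact ⟨by simp, Or.inl hu⟩
    · exact ⟨by simp, Or.inr hu⟩

lemma fSum_adj' {V E W : Type*} (K : SimpleGraph (V ⊕ E)) (H : SimpleGraph W)
    (a b : (V ⊕ E) × W) :
    (fSum K H).Adj a b ↔
      (a.1 = b.1 ∧ (∃ u : V, a.1 = Sum.inl u) ∧ H.Adj a.2 b.2) ∨
        (a.2 = b.2 ∧ K.Adj a.1 b.1) := by
  rw [fSum, SimpleGraph.fromRel_adj]
  constructor
  · rintro ⟨hne, h | h⟩
    · exact h
    · rcases h with ⟨h1, ⟨u, hu⟩, h3⟩ | ⟨h1, h2⟩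
      · exact Or.inl ⟨h1.symm, ⟨u, h1.symm ▸ hu⟩, h3.symm⟩
      · exact Or.inr ⟨h1.symm, h2.symm⟩
  · intro h
    refine ⟨?_, Or.inl h⟩
    rcases h with ⟨h1, _, h3⟩ | ⟨h1, h2⟩
    · exact fun he => h3.ne (by rw [he])
    · exact fun he => h2.ne (by rw [he])

lemma eulerian_empty {V : Type*} (A B : Finset (V × V)) (r : V → ℕ)
    (hA : ∀ a ∈ A, r a.1 < r a.2) (hBA : B ⊆ A) (hB : IsEulerianSub B) : B = ∅ := by
  by_contra hne
  obtain ⟨a, ha, hmax⟩ := B.exists_max_image (fun a => r a.2)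
    (Finset.nonempty_iff_ne_empty.2 hne)
  have h1 : 0 < arcInDeg B a.2 :=
    Finset.card_pos.2 ⟨a, Finset.mem_filter.2 ⟨ha, rfl⟩⟩
  rw [hB a.2] at h1
  obtain ⟨b, hb⟩ := Finset.card_pos.1 h1
  rw [Finset.mem_filter] at hb
  have h2 := hA b (hBA hb.1)
  rw [hb.2] at h2
  have h3 := hmax b hb.1
  omega

lemma isAT_of_acyclic {V : Type*} (A : Finset (V × V)) (r : V → ℕ)
    (hA : ∀ a ∈ A, r a.1 < r a.2) : IsATOrientation A := by
  have hemp : IsEulerianSub (∅ : Finset (V × V)) := by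
    intro v; simp [arcInDeg, arcOutDeg]
  have h1 : (A.powerset.filter fun B => IsEulerianSub B ∧ Even B.card) = {∅} := by
    ext B
    simp only [Finset.mem_filter, Finset.mem_singleton, Finset.mem_powerset]
    constructor
    · rintro ⟨hB, hE, _⟩; exact eulerian_empty A B r hA hB hE
    · rintro rfl; exact ⟨Finset.empty_subset _, hemp, by simp⟩
  have h2 : (A.powerset.filter fun B => IsEulerianSub B ∧ ¬ Even B.card) = ∅ := by
    ext B
    simp only [Finset.mem_filter, Finset.mem_powerset, Finset.notMem_empty, iff_false, not_and]
    intro hB hE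
    rw [eulerian_empty A B r hA hB hE]
    simp
  rw [IsATOrientation, h1, h2]
  simp

/-! ### The explicit orientation for the upper bound -/

/-- Rank function: subdivision vertices get rank `0`, original vertices in layer `j`
get rank `j+1`. -/
def myRank {n m : ℕ} (p : ((Fin 1 ⊕ Fin n) ⊕ ↥(starGraph n).edgeSet) × Fin m) : ℕ :=
  Sum.elim (fun _ => (p.2 : ℕ) + 1) (fun _ => 0) p.1

lemma rank_ne {n m : ℕ} (a b : ((Fin 1 ⊕ Fin n) ⊕ ↥(starGraph n).edgeSet) × Fin m)
    (hab : (sSum (starGraph n) (SimpleGraph.pathGraph m)).Adj a b) :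
    myRank a ≠ myRank b := by
  rw [sSum, fSum_adj'] at hab
  rcases hab with ⟨h1, ⟨u, hu⟩, h3⟩ | ⟨h2, hK⟩
  · rw [SimpleGraph.pathGraph_adj] at h3
    have hb : b.1 = Sum.inl u := h1 ▸ hu
    simp only [myRank, hu, hb, Sum.elim_inl]
    omega
  · rw [subdivisionGraph_adj'] at hK
    rcases hK with ⟨u, e, _, ⟨ha, hb⟩ | ⟨ha, hb⟩⟩ <;>
      simp [myRank, ha, hb]

/-- The explicit acyclic orientation. -/
noncomputable def myA (n m : ℕ) :
    Finset ((((Fin 1 ⊕ Fin n) ⊕ ↥(starGraph n).edgeSet) × Fin m) ×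
      (((Fin 1 ⊕ Fin n) ⊕ ↥(starGraph n).edgeSet) × Fin m)) :=
  Finset.univ.filter fun a =>
    (sSum (starGraph n) (SimpleGraph.pathGraph m)).Adj a.1 a.2 ∧ myRank a.1 < myRank a.2

lemma mem_myA {n m : ℕ} (a) : a ∈ myA n m ↔
    (sSum (starGraph n) (SimpleGraph.pathGraph m)).Adj a.1 a.2 ∧ myRank a.1 < myRank a.2 := by
  simp [myA]

lemma myA_orientation (n m : ℕ) :
    IsOrientation (sSum (starGraph n) (SimpleGraph.pathGraph m)) (myA n m) := by
  constructor
  · exact fun a ha => ((mem_myA a).1 ha).1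
  · intro u v huv
    rw [mem_myA, mem_myA]
    have := rank_ne u v huv
    simp only [huv, huv.symm, true_and]
    omega

lemma myA_AT (n m : ℕ) : IsATOrientation (myA n m) :=
  isAT_of_acyclic _ myRank fun a ha => ((mem_myA a).1 ha).2

lemma myA_outdeg (n m : ℕ) (v : ((Fin 1 ⊕ Fin n) ⊕ ↥(starGraph n).edgeSet) × Fin m) :
    arcOutDeg (myA n m) v < 3 := by
  obtain ⟨x, j⟩ := v
  rcases x with u | e
  · -- original vertex: outdegree ≤ 1
    have key : ∀ a ∈ myA n m, a.1 = (Sum.inl u, j) →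
        a.2.1 = Sum.inl u ∧ (a.2.2 : ℕ) = (j : ℕ) + 1 := by
      intro a ha ha1
      rw [mem_myA] at ha
      obtain ⟨hadj, hrk⟩ := ha
      rw [sSum, fSum_adj'] at hadj
      rcases hadj with ⟨h1, _, h3⟩ | ⟨h2, hK⟩
      · have h1' : a.2.1 = Sum.inl u := by rw [← h1, ha1]
        refine ⟨h1', ?_⟩
        rw [SimpleGraph.pathGraph_adj] at h3
        have hr1 : myRank a.1 = (j : ℕ) + 1 := by rw [ha1]; rfl
        have hr2 : myRank a.2 = (a.2.2 : ℕ) + 1 := by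
          rw [myRank, h1']; rfl
        have hj : a.1.2 = j := by rw [ha1]
        rw [hj] at h3
        rw [hr1, hr2] at hrk
        omega
      · exfalso
        rw [subdivisionGraph_adj'] at hK
        rcases hK with ⟨w, f, _, ⟨hx1, hx2⟩ | ⟨hx1, hx2⟩⟩
        · have hr2 : myRank a.2 = 0 := by rw [myRank, hx2]; rfl
          rw [hr2] at hrk
          omega
        · rw [ha1] at hx1
          simp at hx1
    have hle : arcOutDeg (myA n m) (Sum.inl u, j) ≤ 1 := by
      rw [arcOutDeg, Finset.card_le_one]
      intro a ha b hb
      have ha' : a ∈ myA n m ∧ a.1 = (Sum.inl u, j) := by simpa using ha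
      have hb' : b ∈ myA n m ∧ b.1 = (Sum.inl u, j) := by simpa using hb
      obtain ⟨ha2, ha3⟩ := key a ha'.1 ha'.2
      obtain ⟨hb2, hb3⟩ := key b hb'.1 hb'.2
      have : a.2 = b.2 := Prod.ext (ha2.trans hb2.symm) (Fin.ext (by omega))
      exact Prod.ext (ha'.2.trans hb'.2.symm) this
    omega
  · -- subdivision vertex: outdegree ≤ 2
    obtain ⟨p, q, hpq⟩ : ∃ p q, (e : Sym2 (Fin 1 ⊕ Fin n)) = s(p, q) :=
      Sym2.ind (fun p q => ⟨p, q, rfl⟩) (e : Sym2 (Fin 1 ⊕ Fin n))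
    have hsub : (myA n m).filter (fun a => a.1 = (Sum.inr e, j)) ⊆
        {((Sum.inr e, j), (Sum.inl p, j)), ((Sum.inr e, j), (Sum.inl q, j))} := by
      intro a ha
      rw [Finset.mem_filter] at ha
      obtain ⟨ha, ha1⟩ := ha
      rw [mem_myA] at ha
      obtain ⟨hadj, hrk⟩ := ha
      rw [sSum, fSum_adj'] at hadj
      rcases hadj with ⟨_, ⟨w, hw⟩, _⟩ | ⟨h2, hK⟩
      · rw [ha1] at hw; simp at hw
      · rw [subdivisionGraph_adj'] at hK
        rcases hK with ⟨w, f, hmem, ⟨hy1, hy2⟩ | ⟨hy1, hy2⟩⟩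
        · rw [ha1] at hy1; simp at hy1
        · have hef : f = e := by
            rw [ha1] at hy1
            have hy1' : Sum.inr e = Sum.inr f := hy1
            exact (Sum.inr.inj hy1').symm
          rw [hef, hpq, Sym2.mem_iff] at hmem
          have ha2 : a.2.2 = j := by rw [← h2, ha1]
          simp only [Finset.mem_insert, Finset.mem_singleton]
          rcases hmem with rfl | rfl
          · exact Or.inl (Prod.ext ha1 (Prod.ext hy2 ha2))
          · exact Or.inr (Prod.ext ha1 (Prod.ext hy2 ha2))
    have hcard := Finset.card_le_card hsub
    have h2 := hcard.trans (Finset.card_insert_le _ _)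
    rw [Finset.card_singleton] at h2
    have h3 : arcOutDeg (myA n m) (Sum.inr e, j) =
        (Finset.filter (fun a => a.1 = (Sum.inr e, j)) (myA n m)).card := by
      rw [arcOutDeg, Finset.filter_congr_decidable]
    omega

end Aux
/-! ### The lower bound -/

/-- The edge of the star from the center to leaf `i`, as an element of the edge set. -/
def edg (n : ℕ) (i : Fin n) : ↥(starGraph n).edgeSet :=
  ⟨s(Sum.inl 0, Sum.inr i), by simp [starGraph, completeBipartiteGraph]⟩

/-- Center vertex in layer `j`. -/
def vC (n m : ℕ) (j : Fin m) : ((Fin 1 ⊕ Fin n) ⊕ ↥(starGraph n).edgeSet) × Fin m :=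
  (Sum.inl (Sum.inl 0), j)

/-- Leaf vertex `i` in layer `j`. -/
def vL (n m : ℕ) (i : Fin n) (j : Fin m) :
    ((Fin 1 ⊕ Fin n) ⊕ ↥(starGraph n).edgeSet) × Fin m :=
  (Sum.inl (Sum.inr i), j)

/-- Subdivision vertex of edge `i` in layer `j`. -/
def vW (n m : ℕ) (i : Fin n) (j : Fin m) :
    ((Fin 1 ⊕ Fin n) ⊕ ↥(starGraph n).edgeSet) × Fin m :=
  (Sum.inr (edg n i), j)

/-- Tails of the 11 edges of a theta subgraph. -/
def eU (n m : ℕ) (i0 i1 : Fin n) (j0 j1 : Fin m) :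
    Fin 11 → ((Fin 1 ⊕ Fin n) ⊕ ↥(starGraph n).edgeSet) × Fin m
  | ⟨0, _⟩ => vC n m j0
  | ⟨1, _⟩ => vW n m i0 j0
  | ⟨2, _⟩ => vC n m j0
  | ⟨3, _⟩ => vW n m i1 j0
  | ⟨4, _⟩ => vC n m j1
  | ⟨5, _⟩ => vW n m i0 j1
  | ⟨6, _⟩ => vC n m j1
  | ⟨7, _⟩ => vW n m i1 j1
  | ⟨8, _⟩ => vC n m j0
  | ⟨9, _⟩ => vL n m i0 j0
  | ⟨10, _⟩ => vL n m i1 j0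

/-- Heads of the 11 edges of a theta subgraph. -/
def eV (n m : ℕ) (i0 i1 : Fin n) (j0 j1 : Fin m) :
    Fin 11 → ((Fin 1 ⊕ Fin n) ⊕ ↥(starGraph n).edgeSet) × Fin m
  | ⟨0, _⟩ => vW n m i0 j0
  | ⟨1, _⟩ => vL n m i0 j0
  | ⟨2, _⟩ => vW n m i1 j0
  | ⟨3, _⟩ => vL n m i1 j0
  | ⟨4, _⟩ => vW n m i0 j1
  | ⟨5, _⟩ => vL n m i0 j1
  | ⟨6, _⟩ => vW n m i1 j1
  | ⟨7, _⟩ => vL n m i1 j1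
  | ⟨8, _⟩ => vC n m j1
  | ⟨9, _⟩ => vL n m i0 j1
  | ⟨10, _⟩ => vL n m i1 j1

lemma adj_cw (n m : ℕ) (i : Fin n) (j : Fin m) :
    (sSum (starGraph n) (SimpleGraph.pathGraph m)).Adj (vC n m j) (vW n m i j) := by
  rw [sSum, fSum_adj']
  exact Or.inr ⟨rfl, (subdivisionGraph_adj' _ _ _).2
    ⟨Sum.inl 0, edg n i, by simp [edg], Or.inl ⟨rfl, rfl⟩⟩⟩

lemma adj_wl (n m : ℕ) (i : Fin n) (j : Fin m) :
    (sSum (starGraph n) (SimpleGraph.pathGraph m)).Adj (vW n m i j) (vL n m i j) := by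
  rw [sSum, fSum_adj']
  exact Or.inr ⟨rfl, (subdivisionGraph_adj' _ _ _).2
    ⟨Sum.inr i, edg n i, by simp [edg], Or.inr ⟨rfl, rfl⟩⟩⟩

lemma adj_layer (n m : ℕ) (x : Fin 1 ⊕ Fin n) (j0 j1 : Fin m) (hj : (j0 : ℕ) + 1 = j1) :
    (sSum (starGraph n) (SimpleGraph.pathGraph m)).Adj (Sum.inl x, j0) (Sum.inl x, j1) := by
  rw [sSum, fSum_adj']
  exact Or.inl ⟨rfl, ⟨x, rfl⟩, SimpleGraph.pathGraph_adj.2 (Or.inl hj)⟩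

lemma edges_injective (n m : ℕ) (i0 i1 : Fin n) (hi : i0 ≠ i1) (j0 j1 : Fin m)
    (hj : j0 ≠ j1) (a b : Fin 11)
    (h : (eU n m i0 i1 j0 j1 a = eU n m i0 i1 j0 j1 b ∧
            eV n m i0 i1 j0 j1 a = eV n m i0 i1 j0 j1 b) ∨
         (eU n m i0 i1 j0 j1 a = eV n m i0 i1 j0 j1 b ∧
            eV n m i0 i1 j0 j1 a = eU n m i0 i1 j0 j1 b)) : a = b := by
  have hedg : edg n i0 ≠ edg n i1 := by
    simp [edg, Subtype.ext_iff, Sym2.eq_iff, hi]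
  obtain ⟨a, ha⟩ := a
  obtain ⟨b, hb⟩ := b
  interval_cases a <;> interval_cases b <;>
    simp_all [eU, eV, vC, vL, vW, Prod.ext_iff]

lemma lower_bound (n m : ℕ) (i0 i1 : Fin n) (hi : i0 ≠ i1) (j0 j1 : Fin m)
    (hj : (j0 : ℕ) + 1 = (j1 : ℕ))
    (A : Finset ((((Fin 1 ⊕ Fin n) ⊕ ↥(starGraph n).edgeSet) × Fin m) ×
      (((Fin 1 ⊕ Fin n) ⊕ ↥(starGraph n).edgeSet) × Fin m)))
    (hor : IsOrientation (sSum (starGraph n) (SimpleGraph.pathGraph m)) A)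
    (hdeg : ∀ v, arcOutDeg A v ≤ 1) : False := by
  have hjne : j0 ≠ j1 := fun he => by rw [he] at hj; omega
  -- the ten vertices of the theta subgraph
  set S : Finset (((Fin 1 ⊕ Fin n) ⊕ ↥(starGraph n).edgeSet) × Fin m) :=
    {vC n m j0, vC n m j1, vL n m i0 j0, vL n m i0 j1, vL n m i1 j0, vL n m i1 j1,
      vW n m i0 j0, vW n m i0 j1, vW n m i1 j0, vW n m i1 j1} with hSdef
  have hScard : S.card ≤ 10 := by
    rw [hSdef]
    refine le_trans (Finset.card_insert_le _ _) (Nat.succ_le_succ ?_)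
    refine le_trans (Finset.card_insert_le _ _) (Nat.succ_le_succ ?_)
    refine le_trans (Finset.card_insert_le _ _) (Nat.succ_le_succ ?_)
    refine le_trans (Finset.card_insert_le _ _) (Nat.succ_le_succ ?_)
    refine le_trans (Finset.card_insert_le _ _) (Nat.succ_le_succ ?_)
    refine le_trans (Finset.card_insert_le _ _) (Nat.succ_le_succ ?_)
    refine le_trans (Finset.card_insert_le _ _) (Nat.succ_le_succ ?_)
    refine le_trans (Finset.card_insert_le _ _) (Nat.succ_le_succ ?_)
    refine le_trans (Finset.card_insert_le _ _) (Nat.succ_le_succ ?_)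
    simp
  -- the eleven edges are adjacent pairs
  have hAdj : ∀ i : Fin 11,
      (sSum (starGraph n) (SimpleGraph.pathGraph m)).Adj (eU n m i0 i1 j0 j1 i)
        (eV n m i0 i1 j0 j1 i) := by
    intro i
    obtain ⟨i, hilt⟩ := i
    interval_cases i <;>
      first
        | exact adj_cw n m _ _
        | exact adj_wl n m _ _
        | exact adj_layer n m _ j0 j1 hj
  -- endpoints lie in S
  have hUS : ∀ i : Fin 11, eU n m i0 i1 j0 j1 i ∈ S := by
    intro i
    obtain ⟨i, hilt⟩ := i
    interval_cases i <;> simp [hSdef, eU]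
  have hVS : ∀ i : Fin 11, eV n m i0 i1 j0 j1 i ∈ S := by
    intro i
    obtain ⟨i, hilt⟩ := i
    interval_cases i <;> simp [hSdef, eV]
  -- pick the tail of the orientation of each edge
  classical
  set g : Fin 11 → ((Fin 1 ⊕ Fin n) ⊕ ↥(starGraph n).edgeSet) × Fin m :=
    fun i => if (eU n m i0 i1 j0 j1 i, eV n m i0 i1 j0 j1 i) ∈ A
      then eU n m i0 i1 j0 j1 i else eV n m i0 i1 j0 j1 i with hgdef
  set h : Fin 11 → ((Fin 1 ⊕ Fin n) ⊕ ↥(starGraph n).edgeSet) × Fin m :=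
    fun i => if (eU n m i0 i1 j0 j1 i, eV n m i0 i1 j0 j1 i) ∈ A
      then eV n m i0 i1 j0 j1 i else eU n m i0 i1 j0 j1 i with hhdef
  have harc : ∀ i : Fin 11, (g i, h i) ∈ A := by
    intro i
    rw [hgdef, hhdef]
    simp only
    split_ifs with hd
    · exact hd
    · by_contra hc
      exact hd ((hor.2 _ _ (hAdj i)).2 hc)
  have hgS : ∀ i : Fin 11, g i ∈ S := by
    intro i
    rw [hgdef]
    simp only
    split_ifs
    · exact hUS i
    · exact hVS i
  obtain ⟨i, -, k, -, hik, hgik⟩ :=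
    Finset.exists_ne_map_eq_of_card_lt_of_maps_to
      (s := (Finset.univ : Finset (Fin 11))) (t := S)
      (by rw [Finset.card_univ, Fintype.card_fin]; omega) (fun i _ => hgS i)
  have hhik : h i ≠ h k := by
    intro he
    apply hik
    apply edges_injective n m i0 i1 hi j0 j1 hjne i k
    by_cases d1 : (eU n m i0 i1 j0 j1 i, eV n m i0 i1 j0 j1 i) ∈ A <;>
      by_cases d2 : (eU n m i0 i1 j0 j1 k, eV n m i0 i1 j0 j1 k) ∈ A <;>
      simp only [hgdef, hhdef, d1, d2, ite_true, ite_false, if_true, if_false,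
        eq_self_iff_true, not_true, not_false_iff] at hgik he
    · exact Or.inl ⟨hgik, he⟩
    · exact Or.inr ⟨hgik, he⟩
    · exact Or.inr ⟨he, hgik⟩
    · exact Or.inl ⟨he, hgik⟩
  have h2le : 2 ≤ arcOutDeg A (g i) := by
    rw [arcOutDeg]
    rw [show (2 : ℕ) = 1 + 1 from rfl]
    refine Finset.one_lt_card.2 ⟨(g i, h i), ?_, (g k, h k), ?_, ?_⟩
    · simp only [Finset.mem_filter]
      exact ⟨harc i, trivial⟩
    · simp only [Finset.mem_filter]
      exact ⟨harc k, hgik.symm⟩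
    · intro he
      exact hhik (congrArg Prod.snd he)
  have := hdeg (g i)
  omega

/-- `AT(S_n +_S P_m) = 3` for `n ≥ 3`, `m ≥ 2`. -/
theorem stmt7 (n m : ℕ) (hn : 3 ≤ n) (hm : 2 ≤ m) :
    alonTarsiNumber (sSum (starGraph n) (SimpleGraph.pathGraph m)) = 3 := by
  have h3 : 3 ∈ {k : ℕ | ∃ A, IsOrientation (sSum (starGraph n) (SimpleGraph.pathGraph m)) A ∧
      IsATOrientation A ∧ ∀ v, arcOutDeg A v < k} :=
    ⟨myA n m, myA_orientation n m, myA_AT n m, myA_outdeg n m⟩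
  rw [alonTarsiNumber]
  refine le_antisymm (Nat.sInf_le h3) (le_csInf ⟨3, h3⟩ ?_)
  rintro k ⟨A, hor, -, hdeg⟩
  by_contra hlt
  push_neg at hlt
  exact lower_bound n m ⟨0, by omega⟩ ⟨1, by omega⟩ (by simp) ⟨0, by omega⟩ ⟨1, by omega⟩ rfl
    A hor (fun v => by have := hdeg v; omega)
end
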